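/- arXiv:2201.10292 — 2 statements merged into one kernel-verified Lean document; each statement's English description precedes it below -/
import Mathlib

section
/- Let w̄=[i_{ℓ(w)},…,i_1] be a reduced word of w∈W and let c:=i_1 be the color of the rightmost letter. If Γ_{w̄} contains an ordinary arrow whose source is the vertex 1^{γ+} (the γ-fold successor of position 1, for some γ≥0) and whose target is a vertex j of a color adjacent to c, then there exists 0≤ζ<γ such that Γ_{w̄} contains an ordinary arrow from j to 1^{ζ+}. Consequently, for every color d, the (c,d) bicolor subquiver of Γ_{w̄} has a pure saw teeth structure (it has no initial barb). -/
/-!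
Formalization of a statement from "Cluster structures on strata of flag varieties"
(algorithmic seeds for `C_{v,w}`), following the paper's combinatorial conventions.
Words `w̄ = [i_n, …, i_1]` are encoded by a letter function `i : ℕ → I` on positions
`1, …, n` (position 1 is the rightmost letter), and the represented group element is
`s_{i_n} ⋯ s_{i_1} = cs.wordProd (posWord i n)`.
-/

open scoped Classical

namespace PaperStmt

variable {I : Type*}

/-- A simply-laced generalized Cartan matrix: symmetric, `2` on the diagonal,
`0` or `-1` off the diagonal (types `A_n`, `D_n`, `E_n`). -/
structure IsSimplyLacedGCM (A : I → I → ℤ) : Prop where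
  symm : ∀ i j, A i j = A j i
  diag : ∀ i, A i i = 2
  off_diag : ∀ i j, i ≠ j → A i j = 0 ∨ A i j = -1

/-- The Coxeter matrix `M` is the one attached to the generalized Cartan matrix `A`:
`m_{ij} = 3` when `a_{ij} = -1` and `m_{ij} = 2` when `a_{ij} = 0` (for `i ≠ j`). -/
def CoxeterMatrixOfGCM (A : I → I → ℤ) (M : CoxeterMatrix I) : Prop :=
  ∀ i j, i ≠ j → (M i j = 3 ↔ A i j = -1) ∧ (M i j = 2 ↔ A i j = 0)

/-- The word `[i_n, …, i_1]` built from the letter function `i` (position 1 rightmost). -/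
def posWord (i : ℕ → I) (n : ℕ) : List I :=
  (List.range n).reverse.map fun t => i (t + 1)

/-- `succPos n i k` is `k⁺`: the smallest position `j` with `k < j ≤ n` of the same color
as `k`, and `n + 1` if there is none. -/
noncomputable def succPos (n : ℕ) (i : ℕ → I) (k : ℕ) : ℕ :=
  if {j | k < j ∧ j ≤ n ∧ i j = i k}.Nonempty then sInf {j | k < j ∧ j ≤ n ∧ i j = i k}
  else n + 1

/-- The arrows of the quiver `Γ_{w̄}`: a horizontal arrow `k → k⁺` whenever `k⁺ ≤ n`,
and an ordinary arrow `a → b` whenever the colors `i a` and `i b` are adjacent and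
`a⁺ ≥ b⁺ > a > b`. -/
def gammaArr (n : ℕ) (A : I → I → ℤ) (i : ℕ → I) (a b : ℕ) : Prop :=
  (1 ≤ a ∧ b ≤ n ∧ b = succPos n i a) ∨
  (1 ≤ b ∧ a ≤ n ∧ A (i a) (i b) = -1 ∧
    succPos n i b ≤ succPos n i a ∧ a < succPos n i b ∧ b < a)

/-- An ordinary arrow of `Γ_{w̄}`: an arrow between two vertices of different colors. -/
def OrdGamma (n : ℕ) (A : I → I → ℤ) (i : ℕ → I) (a b : ℕ) : Prop :=
  gammaArr n A i a b ∧ i a ≠ i b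

/-- The line of color `c` of a colored quiver with vertex set `V`. -/
def Line (V : Set ℕ) (i : ℕ → I) (c : I) : Set ℕ := {k | k ∈ V ∧ i k = c}

/-- `b` is the successor of `a` on the line of color `c`: no vertex of that line lies
strictly between them. -/
def LineNext (V : Set ℕ) (i : ℕ → I) (c : I) (a b : ℕ) : Prop :=
  a ∈ Line V i c ∧ b ∈ Line V i c ∧ a < b ∧ ∀ x ∈ Line V i c, ¬(a < x ∧ x < b)

/-- There is a chain of consecutive horizontal arrows from `a` to `b` (`a ≤ b`) passing
through all vertices of the line of color `c` between them. -/
def HChain (V : Set ℕ) (E : ℕ → ℕ → Prop) (i : ℕ → I) (c : I) (a b : ℕ) : Prop :=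
  a ∈ Line V i c ∧ b ∈ Line V i c ∧ a ≤ b ∧
    ∀ x y, LineNext V i c x y → a ≤ x → y ≤ b → E x y

/-- A saw tooth of the `(c,d)` bicolor subquiver with right end `b`, left end `a` and
summit `x`: ordinary arrows `a → x` and `x → b` with `b < a`, together with the
horizontal chain from `b` to `a`. -/
def IsTooth (V : Set ℕ) (E : ℕ → ℕ → Prop) (i : ℕ → I) (c d : I) (b a x : ℕ) : Prop :=
  b < a ∧ x ∈ Line V i d ∧ E a x ∧ E x b ∧ HChain V E i c b a

/-- An ordinary arrow of the `(c,d)` bicolor subquiver: an arrow joining a vertex of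
color `c` and a vertex of color `d` of different colors (in either direction). -/
def OrdinaryCD (E : ℕ → ℕ → Prop) (i : ℕ → I) (c d : I) (u v : ℕ) : Prop :=
  E u v ∧ i u ≠ i v ∧ ((i u = c ∧ i v = d) ∨ (i u = d ∧ i v = c))

/-- The data of a saw teeth decomposition of the `(c,d)` bicolor subquiver:
an initial horizontal chain from the least vertex of the `c`-line up to `e0`, an optional
initial barb `e0 → ib`, a sequence of `m` consecutive saw teeth from right end `e0` to left
end `e1`, an optional final barb `fb → e1` (whose source is greater than the target of the
initial barb if both exist), a final horizontal chain from `e1` to the greatest vertex of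
the `c`-line, and no ordinary arrows besides the ones listed (so every remaining `d`-vertex
is isolated in the bicolor subquiver). -/
def SawTeethData (V : Set ℕ) (E : ℕ → ℕ → Prop) (i : ℕ → I) (c d : I)
    (e0 e1 m : ℕ) (a b x : ℕ → ℕ) (ib fb : Option ℕ) : Prop :=
  (∃ mn, IsLeast (Line V i c) mn ∧ HChain V E i c mn e0) ∧
  (∃ mx, IsGreatest (Line V i c) mx ∧ HChain V E i c e1 mx) ∧
  (∀ t, 1 ≤ t → t ≤ m → IsTooth V E i c d (b t) (a t) (x t)) ∧
  (m = 0 → e1 = e0) ∧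
  (1 ≤ m → b 1 = e0 ∧ a m = e1) ∧
  (∀ t, 1 ≤ t → t < m → b (t + 1) = a t) ∧
  (∀ y, ib = some y → y ∈ Line V i d ∧ E e0 y) ∧
  (∀ y, fb = some y → y ∈ Line V i d ∧ E y e1) ∧
  (∀ y z, ib = some y → fb = some z → y < z) ∧
  (∀ u v, OrdinaryCD E i c d u v →
    (u = e0 ∧ ib = some v) ∨ (fb = some u ∧ v = e1) ∨
      ∃ t, 1 ≤ t ∧ t ≤ m ∧ ((u = a t ∧ v = x t) ∨ (u = x t ∧ v = b t)))

/-- The `(c,d)` bicolor subquiver has a saw teeth structure: either the `c`-line is empty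
and there are no ordinary arrows, or there is a saw teeth decomposition. -/
def HasSawTeeth (V : Set ℕ) (E : ℕ → ℕ → Prop) (i : ℕ → I) (c d : I) : Prop :=
  (Line V i c = ∅ ∧ ∀ u v, ¬OrdinaryCD E i c d u v) ∨
  ∃ e0 e1 m a b x ib fb, SawTeethData V E i c d e0 e1 m a b x ib fb

/-- A pure saw teeth structure: a saw teeth structure with no initial barb. -/
def HasPureSawTeeth (V : Set ℕ) (E : ℕ → ℕ → Prop) (i : ℕ → I) (c d : I) : Prop :=
  (Line V i c = ∅ ∧ ∀ u v, ¬OrdinaryCD E i c d u v) ∨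
  ∃ e0 e1 m a b x fb, SawTeethData V E i c d e0 e1 m a b x none fb
section Aux

variable (n : ℕ) (i : ℕ → I)

lemma succPos_le (k : ℕ) : succPos n i k ≤ n + 1 := by
  unfold succPos
  split
  · rename_i h
    exact le_trans (Nat.sInf_mem h).2.1 (Nat.le_succ n)
  · exact le_rfl

lemma succPos_pos (k : ℕ) : 1 ≤ succPos n i k := by
  unfold succPos
  split
  · rename_i h
    have := (Nat.sInf_mem h).1
    omega
  · omega

lemma succPos_of_gt {k : ℕ} (h : n < k) : succPos n i k = n + 1 := by
  unfold succPos
  split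
  · rename_i hne
    obtain ⟨j, hj1, hj2, _⟩ := hne
    omega
  · rfl

lemma lt_succPos {k : ℕ} (hk : k ≤ n) : k < succPos n i k := by
  unfold succPos
  split
  · rename_i h
    exact (Nat.sInf_mem h).1
  · omega

lemma succPos_spec {k : ℕ} (h : succPos n i k ≤ n) :
    k < succPos n i k ∧ i (succPos n i k) = i k := by
  have hne : {j | k < j ∧ j ≤ n ∧ i j = i k}.Nonempty := by
    by_contra h'
    rw [succPos, if_neg h'] at h
    omega
  have hm := Nat.sInf_mem hne
  simp only [succPos, if_pos hne]
  exact ⟨hm.1, hm.2.2⟩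

lemma succPos_min {k j : ℕ} (h1 : k < j) (h2 : j ≤ n) (h3 : i j = i k) :
    succPos n i k ≤ j := by
  have hj : j ∈ {j | k < j ∧ j ≤ n ∧ i j = i k} := ⟨h1, h2, h3⟩
  unfold succPos
  split
  · exact Nat.sInf_le hj
  · rename_i h
    exact absurd ⟨j, hj⟩ h

lemma gap_ne {k j : ℕ} (h1 : k < j) (h2 : j ≤ n) (h3 : j < succPos n i k) :
    i j ≠ i k := fun hc => absurd (succPos_min n i h1 h2 hc) (by omega)

end Aux
/-- `qit n i γ = 1^{γ+}`, the `γ`-fold successor of position 1. -/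
noncomputable def qit (n : ℕ) (i : ℕ → I) (γ : ℕ) : ℕ := (succPos n i)^[γ] 1

section QIt

variable (n : ℕ) (i : ℕ → I)

@[simp] lemma qit_zero : qit n i 0 = 1 := rfl

lemma qit_succ (γ : ℕ) : qit n i (γ + 1) = succPos n i (qit n i γ) := by
  simp [qit, Function.iterate_succ_apply']

variable (hn : 1 ≤ n)
include hn

lemma qit_pos (γ : ℕ) : 1 ≤ qit n i γ := by
  cases γ with
  | zero => simp
  | succ γ => rw [qit_succ]; exact succPos_pos n i _

lemma qit_le (γ : ℕ) : qit n i γ ≤ n + 1 := by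
  cases γ with
  | zero => simp
  | succ γ => rw [qit_succ]; exact succPos_le n i _

lemma qit_lt {γ : ℕ} (h : qit n i γ ≤ n) : qit n i γ < qit n i (γ + 1) := by
  rw [qit_succ]; exact lt_succPos n i h

lemma qit_color {γ : ℕ} (h : qit n i γ ≤ n) : i (qit n i γ) = i 1 := by
  induction γ with
  | zero => simp
  | succ γ ih =>
    rw [qit_succ] at h ⊢
    have hγ : qit n i γ ≤ n := by
      by_contra h'
      rw [succPos_of_gt n i (by omega)] at h
      omega
    rw [(succPos_spec n i h).2]
    exact ih hγ

lemma qit_mono : Monotone (qit n i) := by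
  apply monotone_nat_of_le_succ
  intro γ
  by_cases h : qit n i γ ≤ n
  · exact le_of_lt (qit_lt n i hn h)
  · have : qit n i γ = n + 1 := by have := qit_le n i hn γ; omega
    rw [qit_succ, this, succPos_of_gt n i (by omega)]

lemma qit_lt_of_lt {γ δ : ℕ} (h : γ < δ) (hγ : qit n i γ ≤ n) :
    qit n i γ < qit n i δ :=
  lt_of_lt_of_le (qit_lt n i hn hγ) (qit_mono n i hn h)

lemma lt_of_qit_lt {γ δ : ℕ} (h : qit n i γ < qit n i δ) : γ < δ := by
  by_contra h'
  exact absurd (qit_mono n i hn (by omega : δ ≤ γ)) (by omega)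

lemma qit_ge (γ : ℕ) : γ + 1 ≤ qit n i γ ∨ qit n i γ = n + 1 := by
  induction γ with
  | zero => left; simp
  | succ γ ih =>
    rcases ih with h | h
    · by_cases hγ : qit n i γ ≤ n
      · left; have := qit_lt n i hn hγ; omega
      · right
        have := qit_le n i hn γ
        rw [qit_succ, succPos_of_gt n i (by omega)]
    · right; rw [qit_succ, h, succPos_of_gt n i (by omega)]

lemma qit_between {j γ : ℕ} (h1 : 1 ≤ j) (h2 : j < qit n i γ) :
    ∃ ζ, ζ < γ ∧ qit n i ζ ≤ j ∧ j < qit n i (ζ + 1) := by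
  induction γ with
  | zero => simp at h2; omega
  | succ γ ih =>
    by_cases h : j < qit n i γ
    · obtain ⟨ζ, hζ, h3, h4⟩ := ih h
      exact ⟨ζ, by omega, h3, h4⟩
    · exact ⟨γ, by omega, by omega, h2⟩

lemma qit_surj {k : ℕ} (h1 : 1 ≤ k) (h2 : k ≤ n) (h3 : i k = i 1) :
    ∃ γ, qit n i γ = k := by
  have hbig : k < qit n i n := by
    rcases qit_ge n i hn n with h | h <;> omega
  obtain ⟨ζ, _, h4, h5⟩ := qit_between n i hn h1 hbig
  rcases eq_or_lt_of_le h4 with h | h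
  · exact ⟨ζ, h⟩
  · exfalso
    have hζn : qit n i ζ ≤ n := by omega
    have : succPos n i (qit n i ζ) ≤ k :=
      succPos_min n i h h2 (h3.trans (qit_color n i hn hζn).symm)
    rw [← qit_succ] at this
    omega

end QIt
section Arrows

variable (n : ℕ) (A : I → I → ℤ) (i : ℕ → I)

lemma ord_char {u v : ℕ} (hne : i u ≠ i v) :
    gammaArr n A i u v ↔
      (1 ≤ v ∧ u ≤ n ∧ A (i u) (i v) = -1 ∧
        succPos n i v ≤ succPos n i u ∧ u < succPos n i v ∧ v < u) := by
  constructor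
  · rintro (⟨h1, h2, h3⟩ | h)
    · exfalso
      subst h3
      exact hne ((succPos_spec n i h2).2).symm
    · exact h
  · intro h
    exact Or.inr h

lemma target_unique {u v v' : ℕ} (hvv : i v = i v')
    (hne : i u ≠ i v) (hne' : i u ≠ i v')
    (h1 : gammaArr n A i u v) (h2 : gammaArr n A i u v') : v = v' := by
  rw [ord_char n A i hne] at h1
  rw [ord_char n A i hne'] at h2
  obtain ⟨ha1, ha2, -, -, ha5, ha6⟩ := h1
  obtain ⟨hb1, hb2, -, -, hb5, hb6⟩ := h2
  rcases lt_trichotomy v v' with h | h | h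
  · have := succPos_min n i h (by omega) hvv.symm
    omega
  · exact h
  · have := succPos_min n i h (by omega) hvv
    omega

lemma source_unique {u u' v : ℕ} (huu : i u = i u')
    (hne : i u ≠ i v) (hne' : i u' ≠ i v)
    (h1 : gammaArr n A i u v) (h2 : gammaArr n A i u' v) : u = u' := by
  rw [ord_char n A i hne] at h1
  rw [ord_char n A i hne'] at h2
  obtain ⟨ha1, ha2, -, ha4, ha5, ha6⟩ := h1
  obtain ⟨hb1, hb2, -, hb4, hb5, hb6⟩ := h2
  rcases lt_trichotomy u u' with h | h | h
  · have := succPos_min n i h hb2 huu.symm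
    omega
  · exact h
  · have := succPos_min n i h ha2 huu
    omega

/-- Below any position `B` of a different color than `u`, above a position `u` of
color `i u`, there is a last position of color `i u`. -/
lemma exists_max_below {u B : ℕ} (h1 : 1 ≤ u) (h2 : u < B) (hB : B ≤ n)
    (hc : i B ≠ i u) : ∃ y, 1 ≤ y ∧ y < B ∧ i y = i u ∧ B < succPos n i y := by
  have H : ∀ m u, 1 ≤ u → u < B → i B ≠ i u → B - u ≤ m →
      ∃ y, 1 ≤ y ∧ y < B ∧ i y = i u ∧ B < succPos n i y := by
    intro m
    induction m with
    | zero => intro u h1 h2 hc hle; omega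
    | succ m ih =>
      intro u h1 h2 hc hle
      by_cases hs : succPos n i u ≤ B
      · rcases eq_or_lt_of_le hs with h | h
        · exfalso
          have hx : succPos n i u ≤ n := by omega
          have := (succPos_spec n i hx).2
          rw [h] at this
          exact hc this
        · have hu' : succPos n i u ≤ n := by omega
          have hspec := succPos_spec n i hu'
          obtain ⟨y, hy1, hy2, hy3, hy4⟩ :=
            ih (succPos n i u) (by omega) h (by rw [hspec.2]; exact hc) (by omega)
          exact ⟨y, hy1, hy2, hy3.trans hspec.2, hy4⟩
      · exact ⟨u, h1, h2, rfl, by omega⟩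
  exact H (B - u) u h1 h2 hc le_rfl

/-- Part 1: an ordinary arrow out of `1^{γ+}` into an adjacent color has a return
arrow to some earlier `1^{ζ+}`, sitting in the gap around the target. -/
lemma key_return (hA : IsSimplyLacedGCM A) (hn : 1 ≤ n) {γ j : ℕ}
    (h : OrdGamma n A i (qit n i γ) j) (hadj : A (i 1) (i j) = -1) :
    ∃ ζ, ζ < γ ∧ qit n i ζ < j ∧ j < qit n i (ζ + 1) ∧
      OrdGamma n A i j (qit n i ζ) := by
  obtain ⟨harr, hne⟩ := h
  rw [ord_char n A i hne] at harr
  obtain ⟨h1, h2, h3, h4, h5, h6⟩ := harr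
  have hjn : j ≤ n := by omega
  obtain ⟨ζ, hζγ, hq1, hq2⟩ := qit_between n i hn h1 h6
  have hζn : qit n i ζ ≤ n := by omega
  have hcolζ : i (qit n i ζ) = i 1 := qit_color n i hn hζn
  have hj1 : i j ≠ i 1 := fun hh => by
    rw [hh, hA.diag] at hadj; omega
  have hlt : qit n i ζ < j := by
    rcases eq_or_lt_of_le hq1 with h | h
    · exact absurd (h ▸ hcolζ : i j = i 1) hj1
    · exact h
  have hne' : i j ≠ i (qit n i ζ) := by rw [hcolζ]; exact hj1
  refine ⟨ζ, hζγ, hlt, hq2, Or.inr ?_, hne'⟩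
  refine ⟨qit_pos n i hn ζ, hjn, ?_, ?_, ?_, hlt⟩
  · rw [hcolζ, hA.symm]; exact hadj
  · rw [← qit_succ]
    have : qit n i (ζ + 1) ≤ qit n i γ := qit_mono n i hn (by omega)
    omega
  · rw [← qit_succ]; exact hq2

end Arrows
section Helpers

variable (n : ℕ) (A : I → I → ℤ) (i : ℕ → I)

lemma mem_line_iff {c : I} {k : ℕ} :
    k ∈ Line (Set.Icc 1 n) i c ↔ 1 ≤ k ∧ k ≤ n ∧ i k = c := by
  simp [Line, Set.mem_Icc, and_assoc]

lemma hchain_all {c : I} {a b : ℕ} (ha : a ∈ Line (Set.Icc 1 n) i c)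
    (hb : b ∈ Line (Set.Icc 1 n) i c) (hab : a ≤ b) :
    HChain (Set.Icc 1 n) (gammaArr n A i) i c a b := by
  refine ⟨ha, hb, hab, ?_⟩
  rintro x y ⟨hx, hy, hlt, hbet⟩ - -
  rw [mem_line_iff] at hx hy
  have hyx : i y = i x := hy.2.2.trans hx.2.2.symm
  have hs : succPos n i x ≤ y := succPos_min n i hlt hy.2.1 hyx
  have hsn : succPos n i x ≤ n := le_trans hs hy.2.1
  have hspec := succPos_spec n i hsn
  rcases eq_or_lt_of_le hs with h | h
  · exact Or.inl ⟨hx.1, h ▸ hsn, h.symm⟩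
  · exfalso
    refine hbet (succPos n i x) ?_ ⟨hspec.1, h⟩
    rw [mem_line_iff]
    exact ⟨by omega, hsn, hspec.2.trans hx.2.2⟩

/-- Return arrow for a tooth, in `OrdinaryCD` form. -/
lemma tooth_return (hA : IsSimplyLacedGCM A) (hn : 1 ≤ n) {d : I} {γ x : ℕ}
    (h : OrdinaryCD (gammaArr n A i) i (i 1) d (qit n i γ) x) :
    ∃ ζ, ζ < γ ∧ qit n i ζ < x ∧ x < qit n i (ζ + 1) ∧
      OrdinaryCD (gammaArr n A i) i (i 1) d x (qit n i ζ) := by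
  obtain ⟨harr, hne, hcol⟩ := h
  have htup := (ord_char n A i hne).1 harr
  obtain ⟨h1, h2, h3, h4, h5, h6⟩ := htup
  have hcolu : i (qit n i γ) = i 1 := qit_color n i hn h2
  have hxd : i x = d := by
    rcases hcol with ⟨-, h⟩ | ⟨hud, hx1⟩
    · exact h
    · exact absurd (hcolu.trans hx1.symm) hne
  have hadj : A (i 1) (i x) = -1 := by rw [← hcolu]; exact h3
  obtain ⟨ζ, hζγ, hq1, hq2, harr', hne'⟩ :=
    key_return n A i hA hn ⟨harr, hne⟩ hadj
  exact ⟨ζ, hζγ, hq1, hq2, harr', hne',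
    Or.inr ⟨hxd, qit_color n i hn (by omega)⟩⟩

end Helpers
lemma part2 (n : ℕ) (A : I → I → ℤ) (i : ℕ → I) (hA : IsSimplyLacedGCM A)
    (hn : 1 ≤ n) (d : I) :
    HasPureSawTeeth (Set.Icc 1 n) (gammaArr n A i) i (i 1) d := by
  classical
  set Ocd := OrdinaryCD (gammaArr n A i) i (i 1) d with hOcd_def
  -- the least and greatest elements of the c-line
  have h1mem : (1:ℕ) ∈ Line (Set.Icc 1 n) i (i 1) := (mem_line_iff n i).2 ⟨le_rfl, hn, rfl⟩
  obtain ⟨mx, hmxmem, hmxub⟩ : ∃ mx, mx ∈ Line (Set.Icc 1 n) i (i 1) ∧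
      ∀ k ∈ Line (Set.Icc 1 n) i (i 1), k ≤ mx := by
    have hfin : (Line (Set.Icc 1 n) i (i 1)).Finite :=
      Set.Finite.subset (Set.finite_Icc 1 n) (fun k hk => hk.1)
    obtain ⟨mx, hmem, hub⟩ := Set.Finite.exists_maximalFor id _ hfin ⟨1, h1mem⟩
    refine ⟨mx, hmem, fun k hk => ?_⟩
    rcases le_or_gt k mx with h | h
    · exact h
    · exact hub hk (le_of_lt h)
  have hmx : IsGreatest (Line (Set.Icc 1 n) i (i 1)) mx := ⟨hmxmem, hmxub⟩
  have hmx1 : 1 ≤ mx := ((mem_line_iff n i).1 hmx.1).1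
  have hmxn : mx ≤ n := ((mem_line_iff n i).1 hmx.1).2.1
  have hmxc : i mx = i 1 := ((mem_line_iff n i).1 hmx.1).2.2
  have hmxsucc : succPos n i mx = n + 1 := by
    by_contra h
    have hsn : succPos n i mx ≤ n := by have := succPos_le n i mx; omega
    have hspec := succPos_spec n i hsn
    have hmem2 : succPos n i mx ∈ Line (Set.Icc 1 n) i (i 1) :=
      (mem_line_iff n i).2 ⟨by omega, hsn, hspec.2.trans hmxc⟩
    have := hmx.2 hmem2
    omega
  obtain ⟨N, hN⟩ := qit_surj n i hn hmx1 hmxn hmxc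
  have hN1 : qit n i (N + 1) = n + 1 := by rw [qit_succ, hN]; exact hmxsucc
  have hqline : ∀ γ, qit n i γ ≤ n → qit n i γ ∈ Line (Set.Icc 1 n) i (i 1) :=
    fun γ h => (mem_line_iff n i).2 ⟨qit_pos n i hn γ, h, qit_color n i hn h⟩
  have hqmx : ∀ γ, qit n i γ ≤ n → qit n i γ ≤ mx := fun γ h => hmx.2 (hqline γ h)
  -- colors of an arrow
  have hcases : ∀ u v, Ocd u v →
      (i u = i 1 ∧ i v = d ∧ i v ≠ i 1) ∨ (i u ≠ i 1 ∧ i u = d ∧ i v = i 1) := by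
    rintro u v ⟨-, hne, hcol⟩
    rcases hcol with ⟨h1, h2⟩ | ⟨h1, h2⟩
    · exact Or.inl ⟨h1, h2, fun hh => hne (h1.trans hh.symm)⟩
    · exact Or.inr ⟨fun hh => hne (hh.trans h2.symm), h1, h2⟩
  have htup : ∀ u v, Ocd u v → 1 ≤ v ∧ u ≤ n ∧ A (i u) (i v) = -1 ∧
      succPos n i v ≤ succPos n i u ∧ u < succPos n i v ∧ v < u :=
    fun u v h => (ord_char n A i h.2.1).1 h.1
  -- the set of tooth sources
  set Sset : Set ℕ := {γ | ∃ x, Ocd (qit n i γ) x} with hSdef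
  have hSle : ∀ γ ∈ Sset, qit n i γ ≤ n ∧ γ < n := by
    rintro γ ⟨x, hx⟩
    have h2 := (htup _ _ hx).2.1
    rcases qit_ge n i hn γ with h | h
    · exact ⟨h2, by omega⟩
    · omega
  set T : Finset ℕ := (Finset.range n).filter (· ∈ Sset) with hTdef
  have hTmem : ∀ γ, γ ∈ T ↔ γ ∈ Sset := by
    intro γ
    rw [hTdef, Finset.mem_filter, Finset.mem_range]
    exact ⟨fun h => h.2, fun h => ⟨(hSle γ h).2, h⟩⟩
  set m := T.card with hm
  set iso := T.orderIsoOfFin (rfl : T.card = m) with hiso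
  set g : ℕ → ℕ := fun t => if h : t - 1 < m then (iso ⟨t - 1, h⟩ : ℕ) else 0 with hgdef
  have hg_mem : ∀ t, 1 ≤ t → t ≤ m → g t ∈ Sset := by
    intro t h1 h2
    have h : t - 1 < m := by omega
    rw [hgdef]
    simp only [dif_pos h]
    exact (hTmem _).1 (iso ⟨t - 1, h⟩).2
  have hg_lt : ∀ s t, 1 ≤ s → s < t → t ≤ m → g s < g t := by
    intro s t h1 h2 h3
    have hs : s - 1 < m := by omega
    have ht : t - 1 < m := by omega
    rw [hgdef]
    simp only [dif_pos hs, dif_pos ht]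
    have hlt : (⟨s - 1, hs⟩ : Fin m) < ⟨t - 1, ht⟩ := by
      rw [Fin.mk_lt_mk]; omega
    exact Subtype.coe_lt_coe.2 (iso.lt_iff_lt.2 hlt)
  have hg_surj : ∀ γ ∈ Sset, ∃ t, 1 ≤ t ∧ t ≤ m ∧ g t = γ := by
    intro γ hγ
    have hγT : γ ∈ T := (hTmem γ).2 hγ
    set u := iso.symm ⟨γ, hγT⟩ with hu
    have hum := u.isLt
    refine ⟨u.1 + 1, by omega, by omega, ?_⟩
    rw [hgdef]
    have h : u.1 + 1 - 1 < m := by omega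
    simp only [dif_pos h]
    have heq : (⟨u.1 + 1 - 1, h⟩ : Fin m) = u := by
      apply Fin.ext; simp
    rw [heq, hu, OrderIso.apply_symm_apply]
  have hg_refl : ∀ a b, 1 ≤ a → a ≤ m → 1 ≤ b → b ≤ m → g a < g b → a < b := by
    intro a b ha1 ha2 hb1 hb2 hab
    by_contra h
    push_neg at h
    rcases eq_or_lt_of_le h with h | h
    · rw [h] at hab; omega
    · exact absurd (hg_lt b a hb1 h ha2) (by omega)
  have hg_between : ∀ t, 1 ≤ t → t < m → ∀ γ ∈ Sset, g t < γ → γ < g (t + 1) → False := by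
    intro t h1 h2 γ hγ hlt1 hlt2
    obtain ⟨s, hs1, hs2, hs3⟩ := hg_surj γ hγ
    rw [← hs3] at hlt1 hlt2
    have h4 := hg_refl t s h1 (by omega) hs1 hs2 hlt1
    have h5 := hg_refl s (t + 1) hs1 hs2 (by omega) (by omega) hlt2
    omega
  have hg_top : ∀ γ ∈ Sset, γ ≤ g m := by
    intro γ hγ
    obtain ⟨t, ht1, ht2, ht3⟩ := hg_surj γ hγ
    rcases eq_or_lt_of_le ht2 with h | h
    · rw [← ht3, h]
    · have := hg_lt t m ht1 h le_rfl; omega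
  -- tooth data
  set xf : ℕ → ℕ := fun t => if h : ∃ x, Ocd (qit n i (g t)) x then h.choose else 0 with hxfdef
  set bf : ℕ → ℕ := fun t =>
    if h : ∃ ζ, ζ < g t ∧ qit n i ζ < xf t ∧ xf t < qit n i (ζ + 1) ∧ Ocd (xf t) (qit n i ζ)
    then qit n i h.choose else 0 with hbfdef
  have hspec : ∀ t, 1 ≤ t → t ≤ m →
      Ocd (qit n i (g t)) (xf t) ∧
      ∃ ζ, ζ < g t ∧ qit n i ζ < xf t ∧ xf t < qit n i (ζ + 1) ∧ Ocd (xf t) (qit n i ζ) ∧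
        bf t = qit n i ζ := by
    intro t h1 h2
    have hS : ∃ x, Ocd (qit n i (g t)) x := hg_mem t h1 h2
    have hx : Ocd (qit n i (g t)) (xf t) := by
      rw [hxfdef]
      simp only [dif_pos hS]
      exact hS.choose_spec
    have hret := tooth_return n A i hA hn hx
    have hcs := hret.choose_spec
    refine ⟨hx, hret.choose, hcs.1, hcs.2.1, hcs.2.2.1, hcs.2.2.2, ?_⟩
    rw [hbfdef]
    exact dif_pos hret
    -- an unmatched arrow points at the greatest element of the c-line
  have hum : ∀ u v, Ocd u v → i u ≠ i 1 → (¬ ∃ w, Ocd w u) → v = mx := by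
    intro u v huv hu1 hnoin
    obtain ⟨-, hud, hv1⟩ := (hcases u v huv).resolve_left (fun h => hu1 h.1)
    obtain ⟨h1, h2, h3, h4, h5, h6⟩ := htup u v huv
    obtain ⟨ζ, hζ⟩ := qit_surj n i hn h1 (by omega) hv1
    have hsv : succPos n i v = qit n i (ζ + 1) := by rw [qit_succ, hζ]
    have hkey : qit n i (ζ + 1) = n + 1 := by
      by_contra hcon
      have hle : qit n i (ζ + 1) ≤ n := by have := qit_le n i hn (ζ + 1); omega
      have hsu : u < succPos n i u := lt_succPos n i h2
      have hsun : succPos n i u ≤ n + 1 := succPos_le n i u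
      have hζ1u : qit n i (ζ + 1) < succPos n i u := by
        rw [hsv] at h4
        by_cases hsn : succPos n i u ≤ n
        · rcases eq_or_lt_of_le h4 with h | h
          · exfalso
            have hsp := (succPos_spec n i hsn).2
            have : i u = i 1 := by
              rw [← hsp, ← h, qit_color n i hn hle]
            exact hu1 this
          · exact h
        · omega
      obtain ⟨β, hβ1, hβ2, hβ3⟩ := qit_between n i hn
        (j := succPos n i u - 1) (by omega) (by rw [hN1]; omega)
      have hβζ : ζ + 1 ≤ β := by
        by_contra hcon2
        have : qit n i (β + 1) ≤ qit n i (ζ + 1) := qit_mono n i hn (by omega)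
        omega
      have hβu : u < qit n i β := by
        have := qit_mono n i hn hβζ
        omega
      have hβn : qit n i β ≤ n := by omega
      have harrβ : Ocd (qit n i β) u := by
        refine ⟨Or.inr ⟨by omega, hβn, ?_, ?_, by omega, hβu⟩, ?_,
          Or.inl ⟨qit_color n i hn hβn, hud⟩⟩
        · rw [qit_color n i hn hβn, hA.symm]
          rw [hv1] at h3
          exact h3
        · rw [← qit_succ]; omega
        · rw [qit_color n i hn hβn]
          exact Ne.symm hu1
      exact hnoin ⟨qit n i β, harrβ⟩
    have hvub : ∀ k ∈ Line (Set.Icc 1 n) i (i 1), k ≤ v := by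
      intro k hk
      rw [mem_line_iff] at hk
      by_contra hcon
      push_neg at hcon
      obtain ⟨β, hβ⟩ := qit_surj n i hn hk.1 hk.2.1 hk.2.2
      have hζβ : ζ < β := lt_of_qit_lt n i hn (by rw [hζ, hβ]; exact hcon)
      have := qit_mono n i hn (by omega : ζ + 1 ≤ β)
      omega
    have hv_mem : v ∈ Line (Set.Icc 1 n) i (i 1) := (mem_line_iff n i).2 ⟨h1, by omega, hv1⟩
    exact le_antisymm (hmx.2 hv_mem) (hvub mx hmx.1)
  -- if there is any tooth, the greatest c-vertex is a tooth source
  have hNin : Sset.Nonempty → N ∈ Sset := by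
    rintro ⟨γ0, x0, hx0⟩
    obtain ⟨h1, h2, h3, h4, h5, h6⟩ := htup _ _ hx0
    obtain ⟨hc1, hc2, hc3⟩ := (hcases _ _ hx0).resolve_right
      (fun h => h.1 (qit_color n i hn h2))
    have hx0mx : x0 < mx := lt_of_lt_of_le h6 (hqmx γ0 h2)
    obtain ⟨y, hy1, hy2, hy3, hy4⟩ := exists_max_below n i h1 hx0mx hmxn
      (by rw [hmxc]; exact Ne.symm hc3)
    have harr : Ocd mx y := by
      refine ⟨Or.inr ⟨hy1, hmxn, ?_, ?_, hy4, hy2⟩, ?_, Or.inl ⟨hmxc, hy3.trans hc2⟩⟩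
      · rw [hmxc, hy3, ← qit_color n i hn h2]
        exact h3
      · rw [hmxsucc]; exact succPos_le n i y
      · rw [hmxc, hy3]; exact Ne.symm hc3
    exact ⟨y, by rwa [hN]⟩
  have hgm_eq : Sset.Nonempty → qit n i (g m) = mx := by
    intro hne
    have hNS := hNin hne
    have hm1 : 1 ≤ m := by
      obtain ⟨γ0, hγ0⟩ := hne
      have := (hTmem γ0).2 hγ0
      have := Finset.card_pos.2 ⟨γ0, this⟩
      omega
    have hgmS := hg_mem m hm1 le_rfl
    have h1 : N ≤ g m := hg_top N hNS
    have h2 : g m ≤ N := by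
      by_contra h
      push_neg at h
      have hlt := qit_lt_of_lt n i hn h (by rw [hN]; exact hmxn)
      have h3 := (hSle _ hgmS).1
      have h4 := hqmx (g m) h3
      rw [hN] at hlt
      omega
    have : g m = N := by omega
    rw [this, hN]
    -- contiguity of consecutive teeth
  have hcontig : ∀ t, 1 ≤ t → t < m → bf (t + 1) = qit n i (g t) := by
    intro t ht1 ht2
    obtain ⟨hx, ζ0, hζ01, hζ02, hζ03, hζ04, hζ05⟩ := hspec t ht1 (by omega)
    obtain ⟨hx', ζ', hζ'1, hζ'2, hζ'3, hζ'4, hζ'5⟩ := hspec (t + 1) (by omega) (by omega)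
    rw [hζ'5]
    obtain ⟨a1, a2, a3, a4, a5, a6⟩ := htup _ _ hx
    obtain ⟨b1, b2, b3, b4, b5, b6⟩ := htup _ _ hx'
    have hγγ' : g t < g (t + 1) := hg_lt t (t + 1) ht1 (by omega) (by omega)
    have hqlt : qit n i (g t) < qit n i (g (t + 1)) := qit_lt_of_lt n i hn hγγ' a2
    have hxd := (hcases _ _ hx).resolve_right (fun h => h.1 (qit_color n i hn a2))
    have hx'd := (hcases _ _ hx').resolve_right (fun h => h.1 (qit_color n i hn b2))
    -- xf t < xf (t+1)
    have hxx' : xf t < xf (t + 1) := by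
      rcases lt_trichotomy (xf (t + 1)) (xf t) with h | h | h
      · exfalso
        have := succPos_min n i h (by omega : xf t ≤ n)
          (hxd.2.1.trans hx'd.2.1.symm)
        omega
      · exfalso
        have heq := source_unique n A i
          ((qit_color n i hn a2).trans (qit_color n i hn b2).symm)
          hx.2.1 (by rw [h] at hx'; exact hx'.2.1) hx.1 (by rw [h] at hx'; exact hx'.1)
        omega
      · exact h
    have hsx : succPos n i (xf t) ≤ xf (t + 1) :=
      succPos_min n i hxx' (by omega) (hx'd.2.1.trans hxd.2.1.symm)
    have ha4' : succPos n i (xf t) ≤ qit n i (g t + 1) := by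
      rw [qit_succ]; exact a4
    have hγζ' : g t ≤ ζ' := by
      by_contra h
      push_neg at h
      have h7 : qit n i (ζ' + 1) ≤ qit n i (g t) := qit_mono n i hn (by omega)
      omega
    rcases eq_or_lt_of_le hγζ' with h | h
    · rw [← h]
    · exfalso
      have hζ'n : qit n i ζ' ≤ n := by omega
      have hxltζ' : xf t < qit n i ζ' := by
        have h8 := qit_mono n i hn (by omega : g t + 1 ≤ ζ')
        have h9 := lt_succPos n i (by omega : xf t ≤ n)
        omega
      obtain ⟨y, hy1, hy2, hy3, hy4⟩ := exists_max_below n i a1 hxltζ' hζ'n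
        (by rw [qit_color n i hn hζ'n]; exact Ne.symm hxd.2.2)
      have hsy : succPos n i y ≤ qit n i (ζ' + 1) := by
        have := succPos_min n i (show y < xf (t + 1) by omega) (by omega)
          (hx'd.2.1.trans (hy3.trans hxd.2.1).symm)
        omega
      have harr : Ocd (qit n i ζ') y := by
        refine ⟨Or.inr ⟨hy1, hζ'n, ?_, ?_, hy4, hy2⟩, ?_,
          Or.inl ⟨qit_color n i hn hζ'n, hy3.trans hxd.2.1⟩⟩
        · rw [qit_color n i hn hζ'n, hy3, ← qit_color n i hn a2]
          exact a3
        · rw [← qit_succ]; exact hsy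
        · rw [qit_color n i hn hζ'n, hy3]
          exact Ne.symm hxd.2.2
      exact hg_between t ht1 ht2 ζ' ⟨y, harr⟩ h hζ'1
    -- the final barb
  set fb : Option ℕ :=
    if h : ∃ u, i u ≠ i 1 ∧ (∃ v, Ocd u v) ∧ ¬(∃ w, Ocd w u) then some h.choose else none
    with hfbdef
  refine Or.inr ⟨if m = 0 then mx else bf 1, mx, m, (fun t => qit n i (g t)), bf, xf, fb,
    ?_, ?_, ?_, ?_, ?_, ?_, ?_, ?_, ?_, ?_⟩
  · -- initial chain
    refine ⟨1, ⟨h1mem, fun k hk => ((mem_line_iff n i).1 hk).1⟩, ?_⟩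
    by_cases hm0 : m = 0
    · rw [if_pos hm0]
      exact hchain_all n A i h1mem hmx.1 hmx1
    · rw [if_neg hm0]
      obtain ⟨hx, ζ, hζ1, hζ2, hζ3, hζ4, hζ5⟩ := hspec 1 le_rfl (by omega)
      obtain ⟨a1, a2, a3, a4, a5, a6⟩ := htup _ _ hx
      rw [hζ5]
      have hζn : qit n i ζ ≤ n := by omega
      exact hchain_all n A i h1mem (hqline ζ hζn) (qit_pos n i hn ζ)
  · -- final chain
    exact ⟨mx, hmx, hchain_all n A i hmx.1 hmx.1 le_rfl⟩
  · -- teeth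
    intro t h1 h2
    show IsTooth (Set.Icc 1 n) (gammaArr n A i) i (i 1) d (bf t) (qit n i (g t)) (xf t)
    obtain ⟨hx, ζ, hζ1, hζ2, hζ3, hζ4, hζ5⟩ := hspec t h1 h2
    obtain ⟨a1, a2, a3, a4, a5, a6⟩ := htup _ _ hx
    have hζn : qit n i ζ ≤ n := by omega
    have hxd := (hcases _ _ hx).resolve_right (fun h => h.1 (qit_color n i hn a2))
    refine ⟨by rw [hζ5]; omega, (mem_line_iff n i).2 ⟨a1, by omega, hxd.2.1⟩, hx.1,
      by rw [hζ5]; exact hζ4.1, ?_⟩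
    rw [hζ5]
    exact hchain_all n A i (hqline ζ hζn) (hqline (g t) a2) (by omega)
  · -- m = 0 → e1 = e0
    intro h
    rw [if_pos h]
  · -- 1 ≤ m → b 1 = e0 ∧ a m = e1
    intro h
    refine ⟨(if_neg (by omega : ¬ m = 0)).symm, ?_⟩
    exact hgm_eq ⟨g m, hg_mem m h le_rfl⟩
  · -- contiguity
    exact fun t h1 h2 => hcontig t h1 h2
  · -- no initial barb
    intro y h
    simp at h
  · -- final barb
    intro y hy
    rw [hfbdef] at hy
    by_cases h : ∃ u, i u ≠ i 1 ∧ (∃ v, Ocd u v) ∧ ¬(∃ w, Ocd w u)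
    · rw [dif_pos h] at hy
      have hyc : h.choose = y := Option.some.inj hy
      obtain ⟨hc1, ⟨v0, hv0⟩, hcnoin⟩ := h.choose_spec
      rw [hyc] at hc1 hv0 hcnoin
      have hveq := hum y v0 hv0 hc1 hcnoin
      obtain ⟨c1, c2, c3, c4, c5, c6⟩ := htup _ _ hv0
      have hyd := (hcases _ _ hv0).resolve_left (fun hh => hc1 hh.1)
      refine ⟨(mem_line_iff n i).2 ⟨by omega, c2, hyd.2.1⟩, ?_⟩
      rw [← hveq]
      exact hv0.1
    · rw [dif_neg h] at hy
      simp at hy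
  · -- ib/fb order
    intro y z h
    simp at h
  · -- classification of ordinary arrows
    intro u v huv
    obtain ⟨h1, h2, h3, h4, h5, h6⟩ := htup _ _ huv
    rcases hcases _ _ huv with ⟨hu1, hvd, hvne⟩ | ⟨hune, hud, hv1⟩
    · -- source on the c-line : tooth arrow a t → x t
      right; right
      obtain ⟨γ, hγ⟩ := qit_surj n i hn (by omega) h2 hu1
      have hγS : γ ∈ Sset := ⟨v, by rwa [hγ]⟩
      obtain ⟨t, ht1, ht2, ht3⟩ := hg_surj γ hγS
      obtain ⟨hx, -⟩ := hspec t ht1 ht2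
      have hqtu : qit n i (g t) = u := by rw [ht3, hγ]
      have hxd := (hcases _ _ hx).resolve_right
        (fun h => h.1 (qit_color n i hn (htup _ _ hx).2.1))
      refine ⟨t, ht1, ht2, Or.inl ⟨hqtu.symm, ?_⟩⟩
      refine target_unique n A i (hvd.trans hxd.2.1.symm) huv.2.1 ?_ huv.1 ?_
      · rw [hu1]; exact Ne.symm hxd.2.2
      · rw [← hqtu]; exact hx.1
    · by_cases hin : ∃ w, Ocd w u
      · -- matched arrow : tooth arrow x t → b t
        right; right
        obtain ⟨w, hw⟩ := hin
        obtain ⟨hw1, hwd, -⟩ := (hcases _ _ hw).resolve_right (fun hh => hune hh.2.2)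
        obtain ⟨w1, w2, w3, w4, w5, w6⟩ := htup _ _ hw
        obtain ⟨γ, hγ⟩ := qit_surj n i hn (by omega) w2 hw1
        have hγS : γ ∈ Sset := ⟨u, by rwa [hγ]⟩
        obtain ⟨t, ht1, ht2, ht3⟩ := hg_surj γ hγS
        obtain ⟨hx, ζ, hζ1, hζ2, hζ3, hζ4, hζ5⟩ := hspec t ht1 ht2
        obtain ⟨a1, a2, a3, a4, a5, a6⟩ := htup _ _ hx
        have hqtw : qit n i (g t) = w := by rw [ht3, hγ]
        have hxd := (hcases _ _ hx).resolve_right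
          (fun h => h.1 (qit_color n i hn a2))
        have huxf : u = xf t := by
          refine target_unique n A i (hud.trans hxd.2.1.symm) hw.2.1 ?_ hw.1 ?_
          · rw [hw1]; exact Ne.symm hxd.2.2
          · rw [← hqtw]; exact hx.1
        refine ⟨t, ht1, ht2, Or.inr ⟨huxf, ?_⟩⟩
        have hζn : qit n i ζ ≤ n := by omega
        rw [hζ5]
        refine target_unique n A i (hv1.trans (qit_color n i hn hζn).symm) huv.2.1 ?_
          huv.1 ?_
        · intro hh
          exact hune (hh.trans (qit_color n i hn hζn))
        · rw [huxf] at huv ⊢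
          exact hζ4.1
      · -- unmatched arrow : the final barb
        right; left
        have hveq := hum u v huv hune hin
        have hfbEx : ∃ u, i u ≠ i 1 ∧ (∃ v, Ocd u v) ∧ ¬(∃ w, Ocd w u) :=
          ⟨u, hune, ⟨v, huv⟩, hin⟩
        refine ⟨?_, hveq⟩
        rw [hfbdef, dif_pos hfbEx]
        congr 1
        obtain ⟨hc1, ⟨v0, hv0⟩, hcnoin⟩ := hfbEx.choose_spec
        have hv0mx := hum _ _ hv0 hc1 hcnoin
        have hcd : i hfbEx.choose = d :=
          ((hcases _ _ hv0).resolve_left (fun hh => hc1 hh.1)).2.1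
        refine source_unique n A i (v := mx) (hcd.trans hud.symm) ?_ ?_ ?_ ?_
        · intro hh
          exact hc1 (hh.trans hmxc)
        · intro hh
          exact hune (hh.trans hmxc)
        · rw [← hv0mx]; exact hv0.1
        · rw [← hveq]; exact huv.1
/-- Let `c := i 1` be the color of the rightmost letter of the reduced
word `w̄`.  If `Γ_{w̄}` contains an ordinary arrow with source `1^{γ+}` (the `γ`-fold
successor of position `1`) and target a vertex `j` of a color adjacent to `c`, then there
is `0 ≤ ζ < γ` such that `Γ_{w̄}` contains an ordinary arrow from `j` to `1^{ζ+}`.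
Consequently, for every color `d`, the `(c, d)` bicolor subquiver of `Γ_{w̄}` has a pure
saw teeth structure (no initial barb). -/
theorem gamma_firstColor_pureSawTeeth
    {W : Type*} [Group W] (A : I → I → ℤ) (hA : IsSimplyLacedGCM A)
    (M : CoxeterMatrix I) (hM : CoxeterMatrixOfGCM A M) (cs : CoxeterSystem M W)
    (w : W) (n : ℕ) (hn : 1 ≤ n) (i : ℕ → I)
    (hlen : cs.length w = n) (hword : cs.wordProd (posWord i n) = w) :
    (∀ (γ : ℕ) (j : ℕ), OrdGamma n A i ((succPos n i)^[γ] 1) j →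
        A (i 1) (i j) = -1 →
        ∃ ζ, ζ < γ ∧ OrdGamma n A i j ((succPos n i)^[ζ] 1)) ∧
    (∀ d : I, HasPureSawTeeth (Set.Icc 1 n) (gammaArr n A i) i (i 1) d) := by
  constructor
  · intro γ j h hadj
    obtain ⟨ζ, hζ, -, -, h2⟩ := key_return n A i hA hn h hadj
    exact ⟨ζ, hζ, h2⟩
  · intro d
    exact part2 n A i hA hn d

end PaperStmt
end

section
/- Let w̄=[i_{ℓ(w)},…,i_1] be a reduced word of w∈W, let k∈{1,…,ℓ(w)} be a vertex of Γ_{w̄}, and let d be a color adjacent to i_k. Then Γ_{w̄} contains at most one ordinary arrow with source k and target a vertex of color d, and at most one ordinary arrow with target k and source a vertex of color d; in particular, at most two ordinary arrows of Γ_{w̄} join k to vertices of color d. -/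
/-!
Formalization of a statement from "Cluster structures on strata of flag varieties"
(algorithmic seeds for `C_{v,w}`), following the paper's combinatorial conventions.
Words `w̄ = [i_n, …, i_1]` are encoded by a letter function `i : ℕ → I` on positions
`1, …, n` (position 1 is the rightmost letter), and the represented group element is
`s_{i_n} ⋯ s_{i_1} = cs.wordProd (posWord i n)`.
-/

open scoped Classical

namespace PaperStmt

variable {I : Type*}

lemma succPos_le_s3 {n b j : ℕ} {i : ℕ → I} (h1 : b < j) (h2 : j ≤ n) (h3 : i j = i b) :
    succPos n i b ≤ j := by
  unfold succPos
  rw [if_pos ⟨j, h1, h2, h3⟩]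
  exact Nat.sInf_le ⟨h1, h2, h3⟩

lemma ord_spec {n a b : ℕ} {A : I → I → ℤ} {i : ℕ → I} (h : OrdGamma n A i a b) :
    a ≤ n ∧ succPos n i b ≤ succPos n i a ∧ a < succPos n i b ∧ b < a := by
  obtain ⟨harr, hne⟩ := h
  rcases harr with ⟨h1, h2, h3⟩ | h
  · exfalso
    apply hne
    unfold succPos at h3
    split at h3
    · next hne' =>
      subst h3
      exact ((Nat.sInf_mem hne').2.2).symm
    · omega
  · exact ⟨h.2.1, h.2.2.2⟩

/-- Let `w̄` be a reduced word of `w`, `k` a vertex of `Γ_{w̄}` and `d` a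
color adjacent to `i k`.  Then `Γ_{w̄}` contains at most one ordinary arrow with source `k`
and target of color `d`, at most one ordinary arrow with target `k` and source of color
`d`; in particular at most two ordinary arrows of `Γ_{w̄}` join `k` to vertices of
color `d`. -/
theorem gamma_at_most_two_ordinary_arrows
    {W : Type*} [Group W] (A : I → I → ℤ) (hA : IsSimplyLacedGCM A)
    (M : CoxeterMatrix I) (hM : CoxeterMatrixOfGCM A M) (cs : CoxeterSystem M W)
    (w : W) (n : ℕ) (i : ℕ → I)
    (hlen : cs.length w = n) (hword : cs.wordProd (posWord i n) = w)
    (k : ℕ) (hk1 : 1 ≤ k) (hk2 : k ≤ n) (d : I) (hadj : A (i k) d = -1) :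
    (∀ b b', i b = d → i b' = d →
      OrdGamma n A i k b → OrdGamma n A i k b' → b = b') ∧
    (∀ a a', i a = d → i a' = d →
      OrdGamma n A i a k → OrdGamma n A i a' k → a = a') ∧
    (∀ e₁ e₂ e₃ : ℕ × ℕ,
      (OrdGamma n A i e₁.1 e₁.2 ∧ ((e₁.1 = k ∧ i e₁.2 = d) ∨ (e₁.2 = k ∧ i e₁.1 = d))) →
      (OrdGamma n A i e₂.1 e₂.2 ∧ ((e₂.1 = k ∧ i e₂.2 = d) ∨ (e₂.2 = k ∧ i e₂.1 = d))) →
      (OrdGamma n A i e₃.1 e₃.2 ∧ ((e₃.1 = k ∧ i e₃.2 = d) ∨ (e₃.2 = k ∧ i e₃.1 = d))) →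
      e₁ = e₂ ∨ e₁ = e₃ ∨ e₂ = e₃) := by
  have hkd : i k ≠ d := by
    intro h
    rw [h, hA.diag] at hadj
    omega
  have out_unique : ∀ b b', i b = d → i b' = d →
      OrdGamma n A i k b → OrdGamma n A i k b' → b = b' := by
    intro b b' hb hb' h h'
    obtain ⟨hkn, _, hkb, hbk⟩ := ord_spec h
    obtain ⟨_, _, hkb', hb'k⟩ := ord_spec h'
    by_contra hne
    rcases Nat.lt_or_ge b b' with hlt | hge
    · have := succPos_le_s3 hlt (le_trans (le_of_lt hb'k) hkn) (hb'.trans hb.symm)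
      omega
    · have hlt : b' < b := lt_of_le_of_ne hge (Ne.symm hne)
      have := succPos_le_s3 hlt (le_trans (le_of_lt hbk) hkn) (hb.trans hb'.symm)
      omega
  have in_unique : ∀ a a', i a = d → i a' = d →
      OrdGamma n A i a k → OrdGamma n A i a' k → a = a' := by
    intro a a' ha ha' h h'
    obtain ⟨han, hsp, haspk, hka⟩ := ord_spec h
    obtain ⟨ha'n, hsp', haspk', hka'⟩ := ord_spec h'
    by_contra hne
    rcases Nat.lt_or_ge a a' with hlt | hge
    · have := succPos_le_s3 hlt ha'n (ha'.trans ha.symm)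
      omega
    · have hlt : a' < a := lt_of_le_of_ne hge (Ne.symm hne)
      have := succPos_le_s3 hlt han (ha.trans ha'.symm)
      omega
  refine ⟨out_unique, in_unique, ?_⟩
  intro e₁ e₂ e₃ ⟨h1, c1⟩ ⟨h2, c2⟩ ⟨h3, c3⟩
  have keyO : ∀ e f : ℕ × ℕ, OrdGamma n A i e.1 e.2 → OrdGamma n A i f.1 f.2 →
      (e.1 = k ∧ i e.2 = d) → (f.1 = k ∧ i f.2 = d) → e = f := by
    intro e f he hf ce cf
    rw [ce.1] at he
    rw [cf.1] at hf
    exact Prod.ext (ce.1.trans cf.1.symm) (out_unique e.2 f.2 ce.2 cf.2 he hf)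
  have keyI : ∀ e f : ℕ × ℕ, OrdGamma n A i e.1 e.2 → OrdGamma n A i f.1 f.2 →
      (e.2 = k ∧ i e.1 = d) → (f.2 = k ∧ i f.1 = d) → e = f := by
    intro e f he hf ce cf
    rw [ce.1] at he
    rw [cf.1] at hf
    exact Prod.ext (in_unique e.1 f.1 ce.2 cf.2 he hf) (ce.1.trans cf.1.symm)
  rcases c1 with c1 | c1 <;> rcases c2 with c2 | c2 <;> rcases c3 with c3 | c3
  · exact Or.inl (keyO e₁ e₂ h1 h2 c1 c2)
  · exact Or.inl (keyO e₁ e₂ h1 h2 c1 c2)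
  · exact Or.inr (Or.inl (keyO e₁ e₃ h1 h3 c1 c3))
  · exact Or.inr (Or.inr (keyI e₂ e₃ h2 h3 c2 c3))
  · exact Or.inr (Or.inr (keyO e₂ e₃ h2 h3 c2 c3))
  · exact Or.inr (Or.inl (keyI e₁ e₃ h1 h3 c1 c3))
  · exact Or.inl (keyI e₁ e₂ h1 h2 c1 c2)
  · exact Or.inl (keyI e₁ e₂ h1 h2 c1 c2)


end PaperStmt
end
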